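/- arXiv:1810.09575 — 3 statements merged into one kernel-verified Lean document; each statement's English description precedes it below -/
import Mathlib

section
/- For every α : Finset Q, the group H_α contains no logical Z operator; that is, H_α ∩ Z_Z(S) ⊆ S_Z. (Lemma A2.) -/
open Finset
open scoped symmDiff Matrix

namespace CC

variable {Q : Type*} [Fintype Q] [DecidableEq Q]

/-- A subgroup of the abelian group `(Finset Q, ∆)`. -/
def IsSubgroup (S : Set (Finset Q)) : Prop :=
  ∅ ∈ S ∧ ∀ a ∈ S, ∀ b ∈ S, a ∆ b ∈ S

/-- The subgroup of `(Finset Q, ∆)` generated by a set. -/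
def closure (T : Set (Finset Q)) : Set (Finset Q) :=
  ⋂₀ {S : Set (Finset Q) | IsSubgroup S ∧ T ⊆ S}

/-- A CSS stabilizer code on the qubits `Q`. -/
structure CSS (Q : Type*) [Fintype Q] [DecidableEq Q] where
  SX : Set (Finset Q)
  SZ : Set (Finset Q)
  hSX : IsSubgroup SX
  hSZ : IsSubgroup SZ
  comm : ∀ a ∈ SZ, ∀ b ∈ SX, 2 ∣ (a ∩ b).card

def ZX (C : CSS Q) : Set (Finset Q) := {γ | ∀ f ∈ C.SZ, 2 ∣ (γ ∩ f).card}

def ZZ (C : CSS Q) : Set (Finset Q) := {z | ∀ c ∈ C.SX, 2 ∣ (z ∩ c).card}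

/-- Duality assumption. -/
def Dual (C : CSS Q) : Prop :=
  C.SZ = {z | ∀ γ ∈ ZX C, 2 ∣ (z ∩ γ).card} ∧
  C.SX = {c | ∀ z ∈ ZZ C, 2 ∣ (c ∩ z).card}

def LogicalX (C : CSS Q) (l : Finset Q) : Prop := l ∈ ZX C ∧ l ∉ C.SX

def LogicalZ (C : CSS Q) (l : Finset Q) : Prop := l ∈ ZZ C ∧ l ∉ C.SZ

/-- Single-logical-qubit assumption. -/
def SingleQubit (C : CSS Q) : Prop :=
  (ZX C ≠ C.SX ∧ ∀ l l', LogicalX C l → LogicalX C l' → l ∆ l' ∈ C.SX) ∧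
  (ZZ C ≠ C.SZ ∧ ∀ l l', LogicalZ C l → LogicalZ C l' → l ∆ l' ∈ C.SZ)

/-- Intersection axiom. -/
def Inter (C : CSS Q) : Prop :=
  ZZ C = {x | ∃ α ∈ ZX C, ∃ β ∈ ZX C, x = α ∩ β}

def G (C : CSS Q) (α : Finset Q) : Set (Finset Q) :=
  closure (C.SZ ∪ {x | ∃ β ∈ ZX C, x = α ∩ β})

def H (C : CSS Q) (α : Finset Q) : Set (Finset Q) :=
  closure (C.SZ ∪ {x | ∃ β ∈ C.SX, x = α ∩ β})

def Zof (K : Set (Finset Q)) : Set (Finset Q) := {γ | ∀ h ∈ K, 2 ∣ (γ ∩ h).card}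

def Tolerable (C : CSS Q) (α : Finset Q) : Prop := ∀ z ∈ G C α, ¬ LogicalZ C z

def g (b : Q → ℤ) (s : Finset Q) : ℤ := ∑ q ∈ s, b q

/-- T-invariance assumption. -/
def TInv (C : CSS Q) (b : Q → ℤ) : Prop :=
  (∀ β ∈ C.SX, (8 : ℤ) ∣ g b β) ∧
  (∀ β ∈ C.SX, ∀ γ ∈ ZX C, (8 : ℤ) ∣ (g b β - 2 * g b (γ ∩ β)))

def E (C : CSS Q) (b : Q → ℤ) (α : Finset Q) : Set (Finset Q) :=
  {z | ∀ γ ∈ Zof (G C α), g b (γ ∩ α) ≡ 2 * ((z ∩ γ).card : ℤ) [ZMOD 4]}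

/- Quantum setting -/

abbrev M (Q : Type*) [Fintype Q] [DecidableEq Q] :=
  Matrix (Q → ZMod 2) (Q → ZMod 2) ℂ

def supp (v : Q → ZMod 2) : Finset Q := Finset.univ.filter (fun q => v q = 1)

def ind (α : Finset Q) : Q → ZMod 2 := fun q => if q ∈ α then 1 else 0

def XM (α : Finset Q) : M Q :=
  Matrix.of fun u v => if u = v + ind α then (1 : ℂ) else 0

noncomputable def ZM (α : Finset Q) : M Q :=
  Matrix.diagonal fun v => (-1 : ℂ) ^ (supp v ∩ α).card

noncomputable def AM (b : Q → ℤ) (α : Finset Q) : M Q :=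
  Matrix.diagonal fun v => Complex.I ^ (g b (α ∩ supp v))

noncomputable def UM (b : Q → ℤ) : M Q :=
  Matrix.diagonal fun v => Complex.exp (Real.pi * Complex.I / 4) ^ (g b (supp v))

def Encoded (C : CSS Q) (ρ : M Q) : Prop :=
  ρ.trace = 1 ∧
  (∀ c ∈ C.SX, XM c * ρ = ρ ∧ ρ * XM c = ρ) ∧
  (∀ f ∈ C.SZ, ZM f * ρ = ρ ∧ ρ * ZM f = ρ)

instance : Std.Commutative (α := Finset Q) (· ∆ ·) := ⟨symmDiff_comm⟩
instance : Std.Associative (α := Finset Q) (· ∆ ·) := ⟨symmDiff_assoc⟩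

/-- Iterated symmetric difference over a finite index set. -/
def bigΔ {ι : Type*} (s : Finset ι) (f : ι → Finset Q) : Finset Q :=
  s.fold (· ∆ ·) ∅ f

/-!
Write an element of `H_α` as `s ∆ (α ∩ β)` with `s ∈ S_Z`, `β ∈ S_X`. If it lies in `Z_Z`, so does
`z = α ∩ β`, and `z ⊆ β` forces `|z|` to be even. By the intersection axiom `z = μ ∩ ν` with
`μ, ν ∈ Z_X`. If `μ ∈ S_X`, every `|z ∩ γ| = |μ ∩ (ν ∩ γ)|` is even because `ν ∩ γ ∈ Z_Z`.
Otherwise `μ` is a logical `X` operator with `|z ∩ μ| = |z|` even; since the parity of `|z ∩ γ|`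
only depends on the class of `γ` modulo `S_X`, and there is a single logical class, `z` pairs
evenly with all of `Z_X`. In both cases duality puts `z` in `S_Z`.
-/

section

variable {V : Type*} [DecidableEq V]

theorem card_symmDiff_add_two_mul_card_inter (a b : Finset V) :
    #(a ∆ b) + 2 * #(a ∩ b) = #a + #b := by
  rw [show a ∆ b = (a ∪ b) \ (a ∩ b) from symmDiff_eq_sup_sdiff_inf a b,
    card_sdiff_of_subset inter_subset_union, ← card_union_add_card_inter a b]
  have := card_le_card (inter_subset_union (s := a) (t := b))
  omega

theorem two_dvd_card_symmDiff {a b : Finset V} (ha : 2 ∣ #a) (hb : 2 ∣ #b) :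
    2 ∣ #(a ∆ b) := by
  have := card_symmDiff_add_two_mul_card_inter a b
  omega

theorem closure_subset {T S : Set (Finset V)} (hS : IsSubgroup S) (hT : T ⊆ S) :
    closure T ⊆ S :=
  fun _ hx => Set.mem_sInter.mp hx S ⟨hS, hT⟩

end

variable {C : CSS Q}

theorem symmDiff_mem_ZZ {a b : Finset Q} (ha : a ∈ ZZ C) (hb : b ∈ ZZ C) : a ∆ b ∈ ZZ C :=
  fun c hc => by
    rw [show (a ∆ b) ∩ c = (a ∩ c) ∆ (b ∩ c) from inf_symmDiff_distrib_right a b c]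
    exact two_dvd_card_symmDiff (ha c hc) (hb c hc)

theorem H_subset (C : CSS Q) (α : Finset Q) :
    H C α ⊆ {x | ∃ s ∈ C.SZ, ∃ β ∈ C.SX, x = s ∆ (α ∩ β)} := by
  refine closure_subset ⟨⟨∅, C.hSZ.1, ∅, C.hSX.1, by simp⟩, ?_⟩ ?_
  · rintro _ ⟨s, hs, β, hβ, rfl⟩ _ ⟨s', hs', β', hβ', rfl⟩
    refine ⟨s ∆ s', C.hSZ.2 s hs s' hs', β ∆ β', C.hSX.2 β hβ β' hβ', ?_⟩
    rw [show α ∩ (β ∆ β') = (α ∩ β) ∆ (α ∩ β') from inf_symmDiff_distrib_left α β β']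
    exact symmDiff_symmDiff_symmDiff_comm s (α ∩ β) s' (α ∩ β')
  · rintro x (hx | ⟨β, hβ, rfl⟩)
    · exact ⟨x, hx, ∅, C.hSX.1, by rw [inter_empty]; exact (symmDiff_bot x).symm⟩
    · exact ⟨∅, C.hSZ.1, β, hβ, (bot_symmDiff _).symm⟩

theorem mem_SZ_of_two_dvd_card_inter_logicalX (hdual : Dual C) (hsingle : SingleQubit C)
    {z l : Finset Q} (hz : z ∈ ZZ C) (hl : LogicalX C l) (hzl : 2 ∣ #(z ∩ l)) : z ∈ C.SZ := by
  rw [hdual.1]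
  intro γ hγ
  by_cases hγX : γ ∈ C.SX
  · exact hz γ hγX
  · have hlγ : l ∆ γ ∈ C.SX := hsingle.1.2 l γ hl ⟨hγ, hγX⟩
    rw [← symmDiff_symmDiff_cancel_left l γ,
      show z ∩ l ∆ (l ∆ γ) = (z ∩ l) ∆ (z ∩ (l ∆ γ)) from inf_symmDiff_distrib_left _ _ _]
    exact two_dvd_card_symmDiff hzl (hz _ hlγ)

theorem mem_SZ_of_subset_mem_SX (hdual : Dual C) (hsingle : SingleQubit C) (hinter : Inter C)
    {z β : Finset Q} (hz : z ∈ ZZ C) (hβ : β ∈ C.SX) (hzβ : z ⊆ β) : z ∈ C.SZ := by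
  have hz_even : 2 ∣ #z := by simpa [inter_eq_left.mpr hzβ] using hz β hβ
  obtain ⟨μ, hμ, ν, hν, rfl⟩ : ∃ μ ∈ ZX C, ∃ ν ∈ ZX C, z = μ ∩ ν := by
    rw [hinter] at hz; exact hz
  by_cases hμX : μ ∈ C.SX
  · rw [hdual.1]
    intro γ hγ
    have hνγ : ν ∩ γ ∈ ZZ C := by rw [hinter]; exact ⟨ν, hν, γ, hγ, rfl⟩
    rw [inter_assoc, inter_comm]
    exact hνγ μ hμX
  · refine mem_SZ_of_two_dvd_card_inter_logicalX hdual hsingle hz ⟨hμ, hμX⟩ ?_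
    rwa [inter_right_comm, inter_self]

/-- Lemma A2: `H_α` contains no logical `Z` operator. -/
theorem H_no_logical
    (C : CSS Q) (hdual : Dual C) (hsingle : SingleQubit C) (hinter : Inter C)
    (α : Finset Q) :
    H C α ∩ ZZ C ⊆ C.SZ := by
  rintro _ ⟨hH, hZZ⟩
  obtain ⟨s, hs, β, hβ, rfl⟩ := H_subset C α hH
  have hsZZ : s ∈ ZZ C := C.comm s hs
  have hαβ : α ∩ β ∈ ZZ C := by
    simpa only [symmDiff_symmDiff_cancel_left] using symmDiff_mem_ZZ hsZZ hZZ
  exact C.hSZ.2 s hs _ (mem_SZ_of_subset_mem_SX hdual hsingle hinter hαβ hβ inter_subset_right)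

end CC
end

section
/- For every α : Finset Q, every γ ∈ Z(G_α) and every β ∈ S_X: g(γ ∩ (α Δ β)) ≡ g(γ ∩ α) (mod 4). (Invariance of the function g modulo 4 under stabilizer deformations of the error, from the proof of Lemma 1.) -/
open Finset
open scoped symmDiff Matrix

namespace CC

variable {Q : Type*} [Fintype Q] [DecidableEq Q]

/-!
Since `γ ∩ (α ∆ β) = (γ ∩ α) ∆ (γ ∩ β)` and `g(s ∆ t) = g s + g t - 2 g(s ∩ t)`, the claim reduces to
`4 ∣ g(γ ∩ β)` and `2 ∣ g(γ ∩ α ∩ β)`. The first is T-invariance, once `γ ∈ Z_X(S)` (as `S_Z ⊆ G_α`).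
The second holds because `g` has the parity of the cardinality (every `b q` is odd), and
`|γ ∩ (α ∩ β)|` is even: `β ∈ S_X ⊆ Z_X(S)` makes `α ∩ β` a generator of `G_α`.
-/

omit [Fintype Q] in
lemma subset_closure (T : Set (Finset Q)) : T ⊆ closure T :=
  fun _ hx _ hS => hS.2 hx

lemma CSS.SX_subset_ZX (C : CSS Q) : C.SX ⊆ ZX C := fun β hβ f hf => by
  rw [inter_comm]
  exact C.comm f hf β hβ

lemma SZ_subset_G (C : CSS Q) (α : Finset Q) : C.SZ ⊆ G C α :=
  Set.subset_union_left.trans (subset_closure _)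

lemma inter_mem_G (C : CSS Q) (α : Finset Q) {β : Finset Q} (hβ : β ∈ ZX C) : α ∩ β ∈ G C α :=
  subset_closure _ (Set.mem_union_right _ ⟨β, hβ, rfl⟩)

lemma Zof_G_subset_ZX (C : CSS Q) (α : Finset Q) : Zof (G C α) ⊆ ZX C :=
  fun _ hγ f hf => hγ f (SZ_subset_G C α hf)

omit [Fintype Q] in
lemma g_symmDiff (b : Q → ℤ) (s t : Finset Q) :
    g b (s ∆ t) = g b s + g b t - 2 * g b (s ∩ t) := by
  unfold g
  rw [symmDiff_eq_sup_sdiff_inf, sup_eq_union, inf_eq_inter,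
    sum_sdiff_eq_sub inter_subset_union, ← sum_union_inter]
  ring

omit [Fintype Q] [DecidableEq Q] in
lemma g_modEq_card {b : Q → ℤ} (hb : ∀ q, Odd (b q)) (s : Finset Q) :
    g b s ≡ s.card [ZMOD 2] := by
  unfold g
  rw [card_eq_sum_ones, Nat.cast_sum, Nat.cast_one]
  exact Int.ModEq.sum fun q _ => Int.odd_iff.mp (hb q)

lemma TInv.four_dvd_g_inter {C : CSS Q} {b : Q → ℤ} (htinv : TInv C b) {β γ : Finset Q}
    (hβ : β ∈ C.SX) (hγ : γ ∈ ZX C) : 4 ∣ g b (γ ∩ β) := by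
  have h8 := htinv.1 β hβ
  have h8' := htinv.2 β hβ γ hγ
  omega

/-- Invariance of the function `g` modulo 4 under stabilizer deformations of the error
(from the proof of Lemma 1). -/
theorem g_invariance_mod_four
    (C : CSS Q) (b : Q → ℤ) (hb : ∀ q, Odd (b q)) (htinv : TInv C b)
    (α : Finset Q) (γ : Finset Q) (hγ : γ ∈ Zof (G C α))
    (β : Finset Q) (hβ : β ∈ C.SX) :
    g b (γ ∩ (α ∆ β)) ≡ g b (γ ∩ α) [ZMOD 4] := by
  have h4 : 4 ∣ g b (γ ∩ β) := htinv.four_dvd_g_inter hβ (Zof_G_subset_ZX C α hγ)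
  have hcard : 2 ∣ (γ ∩ (α ∩ β)).card := hγ _ (inter_mem_G C α (C.SX_subset_ZX hβ))
  have hpar := g_modEq_card hb (γ ∩ (α ∩ β))
  have hdistrib : γ ∩ (α ∆ β) = (γ ∩ α) ∆ (γ ∩ β) := inf_symmDiff_distrib_left γ α β
  rw [hdistrib, g_symmDiff, ← inter_inter_distrib_left]
  unfold Int.ModEq at hpar ⊢
  omega

end CC
end

section
/- Let S be a stabilizer group and G a subgroup of the Pauli group P on a finite type Q such that every element of G that commutes with all elements of S is a unit-modulus scalar multiple of an element of G ∩ S. Let ρ be an encoded state of S, and let K be a matrix in the ℂ-linear span of G such that for every s ∈ S: trace(ρ · K† · s · K) = 1 if s commutes with every element of G, and trace(ρ · K† · s · K) = 0 otherwise. Then (1/|S|) · Σ_{s ∈ S} s K ρ K† s⁻¹ = (1/|G|) · Σ_{a ∈ G} a ρ a⁻¹; that is, depolarizing K ρ K† over S equals depolarizing ρ over G. (Lemma A5.) -/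
open Finset
open scoped symmDiff Matrix

namespace CC

variable {Q : Type*} [Fintype Q] [DecidableEq Q]

/-- The Pauli group on `Q`: the (finite, hence inverse-closed) multiplicative closure of
the single-qubit `X` and `Z` operators together with `i·1`. -/
noncomputable def PauliGroup (Q : Type*) [Fintype Q] [DecidableEq Q] : Set (M Q) :=
  ↑(Submonoid.closure
      ((Set.range fun q : Q => XM {q}) ∪ (Set.range fun q : Q => ZM {q}) ∪
        {Complex.I • (1 : M Q)}))

/-- A subgroup of the Pauli group. -/
def IsPauliSubgroup (S : Set (M Q)) : Prop :=
  S ⊆ PauliGroup Q ∧ (1 : M Q) ∈ S ∧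
  (∀ a ∈ S, ∀ b ∈ S, a * b ∈ S) ∧ (∀ a ∈ S, a⁻¹ ∈ S)

/-- A stabilizer group: an abelian subgroup of the Pauli group whose only element that is
a scalar multiple of the identity is the identity itself. -/
def IsStabilizer (S : Set (M Q)) : Prop :=
  IsPauliSubgroup S ∧ (∀ a ∈ S, ∀ b ∈ S, a * b = b * a) ∧
  (∀ s ∈ S, ∀ c : ℂ, s = c • (1 : M Q) → s = 1)


/-! Conjugating `a ρ b†` (`a, b` Pauli) by `s ∈ S` multiplies it by the sign
`commSign s (a b†)`, and `s ↦ commSign s x` is a character of `S`, trivial exactly when `x`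
commutes with `S`. Writing `K = ∑ cᵢ gᵢ` with `gᵢ ∈ G`, averaging `K ρ K†` over `S` keeps only the
terms `a ρ gᵢ†` with `a gᵢ†` in the centralizer of `S`; by the hypothesis on `G`, `a = c h gᵢ` with
`h ∈ S`, so each surviving term is a multiple of `gᵢ ρ gᵢ†`, and `g ρ g†` depends only on the coset
of `g` modulo the centralizer of `S` in `G`. The values `tr(ρ K† s K)` form the character expansion
`∑ᵢ commSign s gᵢ† · wᵢ` of the coset weights `wᵢ`; as they are the indicator of the elements of `S`
commuting with `G`, orthogonality of characters gives every coset the same total weight. Both sides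
are thus multiples of `∑_{g ∈ G} g ρ g†`, and comparing traces fixes the factor. -/

lemma add_add_self_zmodTwo {ι : Type*} (v w : ι → ZMod 2) : v + w + w = v :=
  funext fun _ => CharTwo.add_cancel_right _ _

lemma XM_apply (α : Finset Q) (u v : Q → ZMod 2) :
    XM α u v = if u = v + ind α then 1 else 0 := rfl

lemma XM_mul_XM (α β : Finset Q) :
    XM α * XM β = Matrix.of fun u v => if u = v + ind β + ind α then (1 : ℂ) else 0 := by
  ext u v
  rw [Matrix.mul_apply, Finset.sum_eq_single (v + ind β)] <;> simp +contextual [XM_apply]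

lemma XM_mul_self (α : Finset Q) : XM α * XM α = 1 := by
  ext u v
  rw [XM_mul_XM, Matrix.of_apply, Matrix.one_apply, add_add_self_zmodTwo]

lemma XM_comm (α β : Finset Q) : XM α * XM β = XM β * XM α := by
  simp only [XM_mul_XM, add_right_comm _ (ind α) (ind β)]

lemma XM_conjTranspose (α : Finset Q) : (XM α)ᴴ = XM α := by
  ext u v
  have : v = u + ind α ↔ u = v + ind α := by
    constructor <;> rintro rfl <;> rw [add_add_self_zmodTwo]
  simp [XM_apply, this, apply_ite]

lemma ZM_conjTranspose (β : Finset Q) : (ZM β)ᴴ = ZM β := by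
  simp [ZM, Matrix.diagonal_conjTranspose]

lemma ZM_mul_self (β : Finset Q) : ZM β * ZM β = 1 := by
  simp [ZM, Matrix.diagonal_mul_diagonal, ← pow_add, ← two_mul]

lemma ZM_comm (β γ : Finset Q) : ZM β * ZM γ = ZM γ * ZM β := by
  simp only [ZM, Matrix.diagonal_mul_diagonal, mul_comm]

lemma neg_one_pow_card_symmDiff {α : Type*} [DecidableEq α] (s t : Finset α) :
    (-1 : ℂ) ^ (s ∆ t).card = (-1) ^ s.card * (-1) ^ t.card := by
  have key : (s ∆ t).card + 2 * (s ∩ t).card = s.card + t.card := by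
    rw [symmDiff_def, Finset.sup_eq_union, Finset.card_union_of_disjoint disjoint_sdiff_sdiff]
    have := Finset.card_sdiff_add_card_inter s t
    have := Finset.card_sdiff_add_card_inter t s
    rw [Finset.inter_comm t s] at this
    omega
  have h := congrArg ((-1 : ℂ) ^ ·) key
  simp only [pow_add, pow_mul, neg_one_sq, one_pow, mul_one] at h
  exact h

lemma supp_add_ind (v : Q → ZMod 2) (α : Finset Q) : supp (v + ind α) = supp v ∆ α := by
  ext q
  have : ∀ x : ZMod 2, x = 0 ∨ x = 1 := by decide
  rw [supp, Finset.mem_filter]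
  simp only [supp, ind, Finset.mem_symmDiff, Finset.mem_filter, Finset.mem_univ, true_and,
    Pi.add_apply]
  by_cases hq : q ∈ α <;> rcases this (v q) with h | h <;> simp [hq, h]

lemma XM_mul_ZM (α β : Finset Q) :
    XM α * ZM β = (-1 : ℂ) ^ (α ∩ β).card • (ZM β * XM α) := by
  ext u v
  rw [ZM, Matrix.smul_apply, Matrix.mul_diagonal, Matrix.diagonal_mul, XM_apply]
  split_ifs with h
  · subst h
    have hdist : (supp v ∆ α) ∩ β = (supp v ∩ β) ∆ (α ∩ β) := inf_symmDiff_distrib_right _ _ _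
    rw [supp_add_ind, hdist, neg_one_pow_card_symmDiff, smul_eq_mul, mul_one, one_mul,
      mul_comm, mul_assoc, ← pow_add, Even.neg_one_pow ⟨_, rfl⟩, mul_one]
  · simp

section CommuteUpToSign

variable {u v w : M Q}

def CommuteUpToSign (u v : M Q) : Prop := u * v = v * u ∨ u * v = -(v * u)

lemma CommuteUpToSign.symm (h : CommuteUpToSign u v) : CommuteUpToSign v u := by
  rcases h with h | h
  · exact Or.inl h.symm
  · exact Or.inr (by rw [h, neg_neg])

lemma CommuteUpToSign.mul_left (h₁ : CommuteUpToSign u w) (h₂ : CommuteUpToSign v w) :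
    CommuteUpToSign (u * v) w := by
  rcases h₁ with h₁ | h₁ <;> rcases h₂ with h₂ | h₂
  · left; rw [mul_assoc, h₂, ← mul_assoc, h₁, mul_assoc]
  · right; rw [mul_assoc, h₂, mul_neg, ← mul_assoc, h₁, mul_assoc]
  · right; rw [mul_assoc, h₂, ← mul_assoc, h₁, neg_mul, mul_assoc]
  · left; rw [mul_assoc, h₂, mul_neg, ← mul_assoc, h₁, neg_mul, neg_neg, mul_assoc]

lemma commuteUpToSign_of_eq_neg_one_pow_smul {k : ℕ} (h : u * v = (-1 : ℂ) ^ k • (v * u)) :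
    CommuteUpToSign u v := by
  rcases neg_one_pow_eq_or ℂ k with hk | hk
  · exact Or.inl (by rw [h, hk, one_smul])
  · exact Or.inr (by rw [h, hk, neg_one_smul])

lemma commuteUpToSign_smul_one (c : ℂ) (v : M Q) : CommuteUpToSign (c • 1) v :=
  Or.inl ((Commute.one_left v).smul_left c)

def pauliGenerators (Q : Type*) [Fintype Q] [DecidableEq Q] : Set (M Q) :=
  (Set.range fun q : Q => XM {q}) ∪ (Set.range fun q : Q => ZM {q}) ∪ {Complex.I • (1 : M Q)}

lemma pauliGroup_eq_closure : PauliGroup Q = Submonoid.closure (pauliGenerators Q) := rfl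

lemma commuteUpToSign_of_mem_pauliGenerators (hu : u ∈ pauliGenerators Q)
    (hv : v ∈ pauliGenerators Q) : CommuteUpToSign u v := by
  rcases hu with (⟨q, rfl⟩ | ⟨q, rfl⟩) | rfl
  · rcases hv with (⟨q', rfl⟩ | ⟨q', rfl⟩) | rfl
    · exact Or.inl (XM_comm _ _)
    · exact commuteUpToSign_of_eq_neg_one_pow_smul (XM_mul_ZM _ _)
    · exact (commuteUpToSign_smul_one _ _).symm
  · rcases hv with (⟨q', rfl⟩ | ⟨q', rfl⟩) | rfl
    · exact (commuteUpToSign_of_eq_neg_one_pow_smul (XM_mul_ZM _ _)).symm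
    · exact Or.inl (ZM_comm _ _)
    · exact (commuteUpToSign_smul_one _ _).symm
  · exact commuteUpToSign_smul_one _ _

namespace PauliGroup

lemma commuteUpToSign (hu : u ∈ PauliGroup Q) (hv : v ∈ PauliGroup Q) :
    CommuteUpToSign u v := by
  rw [pauliGroup_eq_closure] at hu hv
  induction hu using Submonoid.closure_induction with
  | mem u hu =>
    induction hv using Submonoid.closure_induction with
    | mem v hv => exact commuteUpToSign_of_mem_pauliGenerators hu hv
    | one => exact Or.inl (by rw [one_mul, mul_one])
    | mul v w _ _ hv hw => exact (hv.symm.mul_left hw.symm).symm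
  | one => exact Or.inl (by rw [one_mul, mul_one])
  | mul u u' _ _ hu hu' => exact hu.mul_left hu'

lemma subset_unitary : PauliGroup Q ⊆ unitary (M Q) := by
  refine Submonoid.closure_le.mpr ?_
  rintro u ((⟨q, rfl⟩ | ⟨q, rfl⟩) | rfl)
  · simp [Unitary.mem_iff, Matrix.star_eq_conjTranspose, XM_conjTranspose, XM_mul_self]
  · simp [Unitary.mem_iff, Matrix.star_eq_conjTranspose, ZM_conjTranspose, ZM_mul_self]
  · simp [Unitary.mem_iff, smul_smul]

lemma conjTranspose_mul_self (hu : u ∈ PauliGroup Q) : uᴴ * u = 1 :=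
  Unitary.star_mul_self_of_mem (subset_unitary hu)

lemma mul_conjTranspose_self (hu : u ∈ PauliGroup Q) : u * uᴴ = 1 :=
  Unitary.mul_star_self_of_mem (subset_unitary hu)

lemma inv_eq_conjTranspose (hu : u ∈ PauliGroup Q) : u⁻¹ = uᴴ :=
  Matrix.inv_eq_left_inv (conjTranspose_mul_self hu)

lemma mul_ne_zero (hu : u ∈ PauliGroup Q) (hv : v ∈ PauliGroup Q) : u * v ≠ 0 :=
  left_ne_zero_of_mul_eq_one (Unitary.mul_star_self_of_mem (subset_unitary (mul_mem hu hv)))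

lemma trace_conj (hu : u ∈ PauliGroup Q) (X : M Q) : (u * X * uᴴ).trace = X.trace := by
  rw [Matrix.trace_mul_cycle, conjTranspose_mul_self hu, one_mul]

end PauliGroup

open Classical in
noncomputable def commSign (u v : M Q) : ℂ := if u * v = v * u then 1 else -1

lemma commSign_comm (u v : M Q) : commSign u v = commSign v u := by
  simp only [commSign, eq_comm]

lemma commSign_of_commute (h : u * v = v * u) : commSign u v = 1 := if_pos h

lemma commSign_of_not_commute (h : u * v ≠ v * u) : commSign u v = -1 := if_neg h

lemma CommuteUpToSign.mul_eq_commSign_smul (h : CommuteUpToSign u v) :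
    u * v = commSign u v • (v * u) := by
  by_cases hc : u * v = v * u
  · rw [commSign_of_commute hc, one_smul, hc]
  · rw [commSign_of_not_commute hc, neg_one_smul]
    exact h.resolve_left hc

namespace PauliGroup

lemma mul_eq_commSign_smul (hu : u ∈ PauliGroup Q) (hv : v ∈ PauliGroup Q) :
    u * v = commSign u v • (v * u) :=
  (commuteUpToSign hu hv).mul_eq_commSign_smul

lemma commSign_mul_right (hu : u ∈ PauliGroup Q) (hv : v ∈ PauliGroup Q)
    (hw : w ∈ PauliGroup Q) : commSign u (v * w) = commSign u v * commSign u w := by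
  refine smul_left_injective ℂ (mul_ne_zero (mul_mem hv hw) hu) ?_
  dsimp only
  rw [← mul_eq_commSign_smul hu (mul_mem hv hw), mul_smul, ← mul_assoc,
    mul_eq_commSign_smul hu hv, smul_mul_assoc, mul_assoc, mul_eq_commSign_smul hu hw,
    mul_smul_comm, mul_assoc, smul_comm]

lemma commSign_mul_left (hu : u ∈ PauliGroup Q) (hv : v ∈ PauliGroup Q)
    (hw : w ∈ PauliGroup Q) : commSign (u * v) w = commSign u w * commSign v w := by
  rw [commSign_comm, commSign_mul_right hw hu hv, commSign_comm w, commSign_comm w]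

end PauliGroup

end CommuteUpToSign

section PauliSubgroup

variable {S : Set (M Q)}

lemma IsPauliSubgroup.conjTranspose_mem (hS : IsPauliSubgroup S) {a : M Q} (ha : a ∈ S) :
    aᴴ ∈ S := by
  rw [← PauliGroup.inv_eq_conjTranspose (hS.1 ha)]
  exact hS.2.2.2 a ha

lemma IsPauliSubgroup.sum_mul_right {β : Type*} [AddCommMonoid β] (hS : IsPauliSubgroup S)
    (hfin : S.Finite) {b : M Q} (hb : b ∈ S) (f : M Q → β) :
    ∑ s ∈ hfin.toFinset, f (s * b) = ∑ s ∈ hfin.toFinset, f s := by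
  have hbP := hS.1 hb
  refine Finset.sum_nbij' (· * b) (· * bᴴ) ?_ ?_ ?_ ?_ (fun _ _ => rfl)
  · simpa using fun s hs => hS.2.2.1 s hs b hb
  · simpa using fun s hs => hS.2.2.1 s hs _ (hS.conjTranspose_mem hb)
  · intro s _
    simp [mul_assoc, PauliGroup.mul_conjTranspose_self hbP]
  · intro s _
    simp [mul_assoc, PauliGroup.conjTranspose_mul_self hbP]

open Classical in
/-- Orthogonality of the characters `s ↦ commSign s x` of `S`. -/
lemma IsPauliSubgroup.sum_commSign (hS : IsPauliSubgroup S) (hfin : S.Finite) {x : M Q}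
    (hx : x ∈ PauliGroup Q) :
    ∑ s ∈ hfin.toFinset, commSign s x =
      if x ∈ S.centralizer then (hfin.toFinset.card : ℂ) else 0 := by
  split_ifs with hxS
  · rw [Finset.sum_congr rfl fun s hs => commSign_of_commute (hxS s (hfin.mem_toFinset.mp hs))]
    simp
  · obtain ⟨s₀, hs₀, hne⟩ : ∃ s₀ ∈ S, s₀ * x ≠ x * s₀ := by
      simpa [Set.mem_centralizer_iff] using hxS
    have hflip := hS.sum_mul_right hfin hs₀ (commSign · x)
    rw [Finset.sum_congr rfl fun s hs => PauliGroup.commSign_mul_left (hS.1 (hfin.mem_toFinset.mp hs))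
      (hS.1 hs₀) hx, ← Finset.sum_mul, commSign_of_not_commute hne] at hflip
    linear_combination -hflip / 2

end PauliSubgroup

noncomputable def twirl (T : Finset (M Q)) : M Q →ₗ[ℂ] M Q where
  toFun X := ∑ t ∈ T, t * X * tᴴ
  map_add' X Y := by simp [mul_add, add_mul, Finset.sum_add_distrib]
  map_smul' c X := by simp [Finset.smul_sum]

lemma twirl_apply (T : Finset (M Q)) (X : M Q) : twirl T X = ∑ t ∈ T, t * X * tᴴ := rfl

lemma trace_twirl {T : Finset (M Q)} (hT : ∀ t ∈ T, t ∈ PauliGroup Q) (X : M Q) :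
    (twirl T X).trace = T.card * X.trace := by
  rw [twirl_apply, Matrix.trace_sum,
    Finset.sum_congr rfl fun t ht => PauliGroup.trace_conj (hT t ht) X]
  simp

lemma sum_conj_inv_eq_twirl {T : Set (M Q)} (hT : T ⊆ PauliGroup Q) (hfin : T.Finite) (X : M Q) :
    ∑ t ∈ hfin.toFinset, t * X * t⁻¹ = twirl hfin.toFinset X :=
  Finset.sum_congr rfl fun t ht => by
    rw [PauliGroup.inv_eq_conjTranspose (hT (hfin.mem_toFinset.mp ht))]

lemma Matrix.eq_trace_smul_of_eq_smul {n R : Type*} [Fintype n] [Semiring R]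
    {X Y : Matrix n n R} {μ : R} (h : X = μ • Y) (hY : Y.trace = 1) : X = X.trace • Y := by
  rw [h, Matrix.trace_smul, hY, smul_eq_mul, mul_one]

lemma Matrix.eq_inv_smul_of_eq_smul {n 𝕜 : Type*} [Fintype n] [Field 𝕜]
    {X Y : Matrix n n 𝕜} {μ m : 𝕜} (h : X = μ • Y) (hX : X.trace = 1) (hY : Y.trace = m) :
    X = m⁻¹ • Y := by
  have hμ : μ * m = 1 := by rw [← hY, ← smul_eq_mul, ← Matrix.trace_smul, ← h, hX]
  rw [h, eq_inv_of_mul_eq_one_left hμ]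

section StabilizedState

variable {s a b ρ K : M Q}

namespace PauliGroup

lemma mul_conjTranspose_eq_commSign_smul (hs : s ∈ PauliGroup Q) (hb : b ∈ PauliGroup Q) :
    b * sᴴ = commSign s b • (sᴴ * b) := by
  calc b * sᴴ = sᴴ * (s * b) * sᴴ := by rw [← mul_assoc, conjTranspose_mul_self hs, one_mul]
    _ = commSign s b • (sᴴ * b) := by
      rw [mul_eq_commSign_smul hs hb, mul_smul_comm, smul_mul_assoc, mul_assoc, mul_assoc,
        mul_conjTranspose_self hs, mul_one]

lemma conj_mul_state_mul (hs : s ∈ PauliGroup Q) (hsρ : s * ρ = ρ) (hρs : ρ * s = ρ)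
    (ha : a ∈ PauliGroup Q) (hb : b ∈ PauliGroup Q) :
    s * (a * ρ * b) * sᴴ = commSign s (a * b) • (a * ρ * b) := by
  have hρsH : ρ * sᴴ = ρ := by
    nth_rewrite 1 [← hρs]
    rw [mul_assoc, mul_conjTranspose_self hs, mul_one]
  calc s * (a * ρ * b) * sᴴ = (s * a) * ρ * (b * sᴴ) := by simp only [mul_assoc]
    _ = (commSign s a * commSign s b) • (a * (s * ρ * sᴴ) * b) := by
      rw [mul_eq_commSign_smul hs ha, mul_conjTranspose_eq_commSign_smul hs hb]
      simp only [smul_mul_assoc, mul_smul_comm, smul_smul, mul_assoc, mul_comm (commSign s b)]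
    _ = commSign s (a * b) • (a * ρ * b) := by
      rw [hsρ, hρsH, commSign_mul_right hs ha hb]

lemma trace_mul_state_mul_eq_zero (hs : s ∈ PauliGroup Q) (hsρ : s * ρ = ρ) (hρs : ρ * s = ρ)
    (ha : a ∈ PauliGroup Q) (hb : b ∈ PauliGroup Q) (hab : s * (a * b) ≠ (a * b) * s) :
    (a * ρ * b).trace = 0 := by
  have h := congrArg Matrix.trace (conj_mul_state_mul hs hsρ hρs ha hb)
  rw [trace_conj hs, commSign_of_not_commute hab, Matrix.trace_smul, neg_one_smul] at h
  exact self_eq_neg.mp h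

lemma trace_mul_mul_state_mul (hs : s ∈ PauliGroup Q) (hρs : ρ * s = ρ)
    (hb : b ∈ PauliGroup Q) (X : M Q) :
    (s * (X * ρ * b)).trace = commSign s b * (X * ρ * b).trace := by
  rw [Matrix.trace_mul_comm, mul_assoc (X * ρ), mul_eq_commSign_smul hb hs, commSign_comm,
    mul_smul_comm, Matrix.trace_smul, ← mul_assoc, mul_assoc X, hρs, smul_eq_mul]

end PauliGroup

lemma mul_conjTranspose_eq_sum {ι : Type*} [Fintype ι] {c : ι → ℂ} {g : ι → M Q}
    (hK : ∑ i, c i • g i = K) (X : M Q) : X * Kᴴ = ∑ i, star (c i) • (X * (g i)ᴴ) := by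
  simp [← hK, Matrix.conjTranspose_sum, Finset.mul_sum]

lemma trace_state_mul_conj_eq_sum {ι : Type*} [Fintype ι] (hs : s ∈ PauliGroup Q)
    (hρs : ρ * s = ρ) {c : ι → ℂ} {g : ι → M Q} (hg : ∀ i, (g i)ᴴ ∈ PauliGroup Q)
    (hK : ∑ i, c i • g i = K) :
    (ρ * (Kᴴ * s * K)).trace =
      ∑ i, commSign s (g i)ᴴ * (star (c i) * (K * ρ * (g i)ᴴ).trace) := by
  have hcycle : (ρ * (Kᴴ * s * K)).trace = (s * (K * ρ * Kᴴ)).trace := by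
    rw [Matrix.trace_mul_comm s, Matrix.trace_mul_comm ρ, mul_assoc, Matrix.trace_mul_cycle]
  rw [hcycle, mul_conjTranspose_eq_sum hK, Finset.mul_sum, Matrix.trace_sum]
  refine Finset.sum_congr rfl fun i _ => ?_
  rw [mul_smul_comm, Matrix.trace_smul, PauliGroup.trace_mul_mul_state_mul hs hρs (hg i),
    smul_eq_mul, mul_left_comm]

end StabilizedState

section Depolarization

variable {S G : Set (M Q)} {ρ a b K : M Q}

lemma exists_eq_smul_mul (hG : IsPauliSubgroup G)
    (hGS : ∀ x ∈ G, x ∈ S.centralizer → ∃ c : ℂ, ∃ h ∈ S, x = c • h)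
    (ha : a ∈ G) (hb : b ∈ G) (hab : a * bᴴ ∈ S.centralizer) :
    ∃ c : ℂ, ∃ h ∈ S, a = (c • h) * b := by
  obtain ⟨c, h, hh, hx⟩ := hGS _ (hG.2.2.1 _ ha _ (hG.conjTranspose_mem hb)) hab
  exact ⟨c, h, hh, by rw [← hx, mul_assoc, PauliGroup.conjTranspose_mul_self (hG.1 hb), mul_one]⟩

lemma mul_state_mul_eq_trace_smul (hS : IsPauliSubgroup S) (hG : IsPauliSubgroup G)
    (hGS : ∀ x ∈ G, x ∈ S.centralizer → ∃ c : ℂ, ∃ h ∈ S, x = c • h)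
    (hρtr : ρ.trace = 1) (hρ : ∀ s ∈ S, s * ρ = ρ ∧ ρ * s = ρ)
    (ha : a ∈ G) (hb : b ∈ G) (hab : a * bᴴ ∈ S.centralizer) :
    a * ρ * bᴴ = (a * ρ * bᴴ).trace • (b * ρ * bᴴ) := by
  obtain ⟨c, h, hh, rfl⟩ := exists_eq_smul_mul hG hGS ha hb hab
  refine Matrix.eq_trace_smul_of_eq_smul (μ := c * commSign h b) ?_
    (by rw [PauliGroup.trace_conj (hG.1 hb), hρtr])
  rw [smul_mul_assoc, PauliGroup.mul_eq_commSign_smul (hS.1 hh) (hG.1 hb)]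
  simp only [smul_mul_assoc, smul_smul, mul_assoc, (hρ h hh).1]

lemma conj_state_eq_of_mem_centralizer (hS : IsPauliSubgroup S) (hG : IsPauliSubgroup G)
    (hGS : ∀ x ∈ G, x ∈ S.centralizer → ∃ c : ℂ, ∃ h ∈ S, x = c • h)
    (hρtr : ρ.trace = 1) (hρ : ∀ s ∈ S, s * ρ = ρ ∧ ρ * s = ρ)
    (ha : a ∈ G) (hb : b ∈ G) (hab : a * bᴴ ∈ S.centralizer) :
    a * ρ * aᴴ = b * ρ * bᴴ := by
  have hbP := hG.1 hb
  have hbρ : (b * ρ * bᴴ).trace = 1 := by rw [PauliGroup.trace_conj hbP, hρtr]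
  obtain ⟨c, h, hh, rfl⟩ := exists_eq_smul_mul hG hGS ha hb hab
  have hbb : commSign h (b * bᴴ) = 1 := by
    rw [PauliGroup.mul_conjTranspose_self hbP]
    exact commSign_of_commute (by rw [one_mul, mul_one])
  have hμ : (c • h * b) * ρ * (c • h * b)ᴴ = (c * star c) • (b * ρ * bᴴ) := by
    rw [← one_smul ℂ (b * ρ * bᴴ), ← hbb, ← PauliGroup.conj_mul_state_mul (hS.1 hh)
      (hρ h hh).1 (hρ h hh).2 hbP (hG.1 (hG.conjTranspose_mem hb))]
    simp only [Matrix.conjTranspose_mul, Matrix.conjTranspose_smul, smul_mul_assoc,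
      mul_smul_comm, smul_smul, mul_assoc, mul_comm (star c)]
  rw [Matrix.eq_trace_smul_of_eq_smul hμ hbρ, PauliGroup.trace_conj (hG.1 ha), hρtr, one_smul]

lemma twirl_mul_state_mul (hS : IsPauliSubgroup S) (hSfin : S.Finite) (hG : IsPauliSubgroup G)
    (hGS : ∀ x ∈ G, x ∈ S.centralizer → ∃ c : ℂ, ∃ h ∈ S, x = c • h)
    (hρtr : ρ.trace = 1) (hρ : ∀ s ∈ S, s * ρ = ρ ∧ ρ * s = ρ) (ha : a ∈ G) (hb : b ∈ G) :
    twirl hSfin.toFinset (a * ρ * bᴴ) =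
      ((hSfin.toFinset.card : ℂ) * (a * ρ * bᴴ).trace) • (b * ρ * bᴴ) := by
  have hbH := hG.conjTranspose_mem hb
  have habP : a * bᴴ ∈ PauliGroup Q := hG.1 (hG.2.2.1 _ ha _ hbH)
  have hsum : twirl hSfin.toFinset (a * ρ * bᴴ) =
      (∑ s ∈ hSfin.toFinset, commSign s (a * bᴴ)) • (a * ρ * bᴴ) := by
    rw [twirl_apply, Finset.sum_smul]
    refine Finset.sum_congr rfl fun s hs => ?_
    have hs := hSfin.mem_toFinset.mp hs
    exact PauliGroup.conj_mul_state_mul (hS.1 hs) (hρ s hs).1 (hρ s hs).2 (hG.1 ha) (hG.1 hbH)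
  rw [hsum, hS.sum_commSign hSfin habP]
  split_ifs with hab
  · rw [mul_smul, ← mul_state_mul_eq_trace_smul hS hG hGS hρtr hρ ha hb hab]
  · obtain ⟨s, hs, hne⟩ : ∃ s ∈ S, s * (a * bᴴ) ≠ a * bᴴ * s := by
      simpa [Set.mem_centralizer_iff] using hab
    rw [PauliGroup.trace_mul_state_mul_eq_zero (hS.1 hs) (hρ s hs).1 (hρ s hs).2 (hG.1 ha)
      (hG.1 hbH) hne, zero_smul, mul_zero, zero_smul]

lemma twirl_mul_state_mul_of_mem_span (hS : IsPauliSubgroup S) (hSfin : S.Finite)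
    (hG : IsPauliSubgroup G) (hGS : ∀ x ∈ G, x ∈ S.centralizer → ∃ c : ℂ, ∃ h ∈ S, x = c • h)
    (hρtr : ρ.trace = 1) (hρ : ∀ s ∈ S, s * ρ = ρ ∧ ρ * s = ρ)
    (hK : K ∈ Submodule.span ℂ G) (hb : b ∈ G) :
    twirl hSfin.toFinset (K * ρ * bᴴ) =
      ((hSfin.toFinset.card : ℂ) * (K * ρ * bᴴ).trace) • (b * ρ * bᴴ) := by
  induction hK using Submodule.span_induction with
  | mem a ha => exact twirl_mul_state_mul hS hSfin hG hGS hρtr hρ ha hb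
  | zero => simp
  | add X Y _ _ hX hY => simp only [add_mul, map_add, Matrix.trace_add, mul_add, add_smul, hX, hY]
  | smul c X _ hX =>
    simp only [smul_mul_assoc, map_smul, Matrix.trace_smul, hX, smul_smul, smul_eq_mul,
      mul_left_comm c]

lemma twirl_conj_state_eq_sum {ι : Type*} [Fintype ι] (hS : IsPauliSubgroup S) (hSfin : S.Finite)
    (hG : IsPauliSubgroup G) (hGS : ∀ x ∈ G, x ∈ S.centralizer → ∃ c : ℂ, ∃ h ∈ S, x = c • h)
    (hρtr : ρ.trace = 1) (hρ : ∀ s ∈ S, s * ρ = ρ ∧ ρ * s = ρ)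
    {c : ι → ℂ} {g : ι → M Q} (hg : ∀ i, g i ∈ G) (hK : ∑ i, c i • g i = K) :
    twirl hSfin.toFinset (K * ρ * Kᴴ) = (hSfin.toFinset.card : ℂ) •
      ∑ i, (star (c i) * (K * ρ * (g i)ᴴ).trace) • (g i * ρ * (g i)ᴴ) := by
  have hKspan : K ∈ Submodule.span ℂ G :=
    hK ▸ Submodule.sum_mem _ fun i _ => Submodule.smul_mem _ _ (Submodule.subset_span (hg i))
  simp only [mul_conjTranspose_eq_sum hK, map_sum, map_smul, Finset.smul_sum, smul_smul,
    twirl_mul_state_mul_of_mem_span hS hSfin hG hGS hρtr hρ hKspan (hg _), mul_left_comm]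

open Classical in
lemma sum_coset_weight_eq {ι : Type*} [Fintype ι] (hS : IsPauliSubgroup S) (hSfin : S.Finite)
    (hG : IsPauliSubgroup G) (hρ : ∀ s ∈ S, s * ρ = ρ ∧ ρ * s = ρ)
    {c : ι → ℂ} {g : ι → M Q} (hg : ∀ i, g i ∈ G) (hK : ∑ i, c i • g i = K)
    (hKexp : ∀ s ∈ S,
      ((∀ a ∈ G, s * a = a * s) → (ρ * (Kᴴ * s * K)).trace = 1) ∧
      (¬ (∀ a ∈ G, s * a = a * s) → (ρ * (Kᴴ * s * K)).trace = 0))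
    {b₀ : M Q} (hb₀ : b₀ ∈ G) :
    ∑ i, (if b₀ * (g i)ᴴ ∈ S.centralizer then star (c i) * (K * ρ * (g i)ᴴ).trace else 0) =
      (hSfin.toFinset.filter fun s => ∀ a ∈ G, s * a = a * s).card / hSfin.toFinset.card := by
  have hS0 : (hSfin.toFinset.card : ℂ) ≠ 0 :=
    Nat.cast_ne_zero.mpr (Finset.card_ne_zero_of_mem (hSfin.mem_toFinset.mpr hS.2.1))
  rw [eq_div_iff hS0, mul_comm]
  have hgH : ∀ i, (g i)ᴴ ∈ G := fun i => hG.conjTranspose_mem (hg i)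
  have hmem : ∀ s ∈ hSfin.toFinset, s ∈ S := fun s hs => hSfin.mem_toFinset.mp hs
  calc _ = ∑ i, (∑ s ∈ hSfin.toFinset, commSign s (b₀ * (g i)ᴴ)) *
          (star (c i) * (K * ρ * (g i)ᴴ).trace) := by
        rw [Finset.mul_sum]
        refine Finset.sum_congr rfl fun i _ => ?_
        rw [hS.sum_commSign hSfin (hG.1 (hG.2.2.1 _ hb₀ _ (hgH i)))]
        split_ifs <;> ring
    _ = ∑ s ∈ hSfin.toFinset, ∑ i, commSign s b₀ *
          (commSign s (g i)ᴴ * (star (c i) * (K * ρ * (g i)ᴴ).trace)) := by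
        rw [Finset.sum_comm]
        refine Finset.sum_congr rfl fun i _ => ?_
        rw [Finset.sum_mul]
        refine Finset.sum_congr rfl fun s hs => ?_
        rw [PauliGroup.commSign_mul_right (hS.1 (hmem s hs)) (hG.1 hb₀) (hG.1 (hgH i)), mul_assoc]
    _ = ∑ s ∈ hSfin.toFinset, commSign s b₀ * (ρ * (Kᴴ * s * K)).trace := by
        refine Finset.sum_congr rfl fun s hs => ?_
        rw [trace_state_mul_conj_eq_sum (hS.1 (hmem s hs)) (hρ s (hmem s hs)).2
          (fun i => hG.1 (hgH i)) hK, Finset.mul_sum]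
    _ = ∑ s ∈ hSfin.toFinset, if ∀ a ∈ G, s * a = a * s then 1 else 0 := by
        refine Finset.sum_congr rfl fun s hs => ?_
        split_ifs with hsG
        · rw [(hKexp s (hmem s hs)).1 hsG, mul_one, commSign_of_commute (hsG b₀ hb₀)]
        · rw [(hKexp s (hmem s hs)).2 hsG, mul_zero]
    _ = _ := by rw [Finset.sum_boole]

open Classical in
lemma sum_ite_conj_state_eq (hS : IsPauliSubgroup S) (hG : IsPauliSubgroup G)
    (hGfin : G.Finite) (hGS : ∀ x ∈ G, x ∈ S.centralizer → ∃ c : ℂ, ∃ h ∈ S, x = c • h)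
    (hρtr : ρ.trace = 1) (hρ : ∀ s ∈ S, s * ρ = ρ ∧ ρ * s = ρ) (hb : b ∈ G) :
    ∑ a ∈ hGfin.toFinset, (if a * bᴴ ∈ S.centralizer then (1 : ℂ) else 0) • (a * ρ * aᴴ) =
      ((hGfin.toFinset.filter (· ∈ S.centralizer)).card : ℂ) • (b * ρ * bᴴ) := by
  have hbP := hG.1 hb
  rw [← hG.sum_mul_right hGfin hb, ← Finset.sum_boole, Finset.sum_smul]
  refine Finset.sum_congr rfl fun a ha => ?_
  have ha := hGfin.mem_toFinset.mp ha
  rw [mul_assoc, PauliGroup.mul_conjTranspose_self hbP, mul_one]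
  split_ifs with haS
  · rw [conj_state_eq_of_mem_centralizer hS hG hGS hρtr hρ (hG.2.2.1 _ ha _ hb) hb
      (by rwa [mul_assoc, PauliGroup.mul_conjTranspose_self hbP, mul_one])]
  · rw [zero_smul, zero_smul]

open Classical in
lemma exists_sum_conj_state_eq_smul_twirl {ι : Type*} [Fintype ι] (hS : IsPauliSubgroup S)
    (hG : IsPauliSubgroup G) (hGfin : G.Finite)
    (hGS : ∀ x ∈ G, x ∈ S.centralizer → ∃ c : ℂ, ∃ h ∈ S, x = c • h)
    (hρtr : ρ.trace = 1) (hρ : ∀ s ∈ S, s * ρ = ρ ∧ ρ * s = ρ)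
    {w : ι → ℂ} {g : ι → M Q} (hg : ∀ i, g i ∈ G) {W : ℂ}
    (hw : ∀ b₀ ∈ G, ∑ i, (if b₀ * (g i)ᴴ ∈ S.centralizer then w i else 0) = W) :
    ∃ μ : ℂ, ∑ i, w i • (g i * ρ * (g i)ᴴ) = μ • twirl hGfin.toFinset ρ := by
  set N := hGfin.toFinset.filter (· ∈ S.centralizer)
  have hN : (N.card : ℂ) ≠ 0 := Nat.cast_ne_zero.mpr (Finset.card_ne_zero_of_mem
    (Finset.mem_filter.mpr ⟨hGfin.mem_toFinset.mpr hG.2.1, fun s _ => by rw [one_mul, mul_one]⟩))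
  refine ⟨W / N.card, ?_⟩
  rw [div_eq_inv_mul, mul_smul, eq_inv_smul_iff₀ hN, Finset.smul_sum]
  calc ∑ i, (N.card : ℂ) • w i • (g i * ρ * (g i)ᴴ)
      = ∑ i, w i • ∑ a ∈ hGfin.toFinset,
          (if a * (g i)ᴴ ∈ S.centralizer then (1 : ℂ) else 0) • (a * ρ * aᴴ) := by
        simp only [sum_ite_conj_state_eq hS hG hGfin hGS hρtr hρ (hg _), smul_comm (N.card : ℂ)]
        rfl
    _ = ∑ a ∈ hGfin.toFinset,
          (∑ i, if a * (g i)ᴴ ∈ S.centralizer then w i else 0) • (a * ρ * aᴴ) := by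
        simp only [Finset.smul_sum, Finset.sum_smul, smul_smul, mul_ite, mul_one, mul_zero]
        exact Finset.sum_comm
    _ = W • twirl hGfin.toFinset ρ := by
        rw [twirl_apply, Finset.smul_sum]
        exact Finset.sum_congr rfl fun a ha => by rw [hw a (hGfin.mem_toFinset.mp ha)]

end Depolarization

/-- Lemma A5: depolarizing `K ρ K†` over the stabilizer `S` equals depolarizing `ρ` over
the Pauli group `G`. -/
theorem depolarization_S_eq_depolarization_G
    (S G : Set (M Q)) (hS : IsStabilizer S) (hSfin : S.Finite)
    (hG : IsPauliSubgroup G) (hGfin : G.Finite)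
    (hGS : ∀ a ∈ G, (∀ s ∈ S, a * s = s * a) →
      ∃ c : ℂ, ‖c‖ = 1 ∧ ∃ h, h ∈ G ∧ h ∈ S ∧ a = c • h)
    (ρ : M Q) (hρtr : ρ.trace = 1) (hρ : ∀ s ∈ S, s * ρ = ρ ∧ ρ * s = ρ)
    (K : M Q) (hK : K ∈ Submodule.span ℂ G)
    (hKexp : ∀ s ∈ S,
      ((∀ a ∈ G, s * a = a * s) → (ρ * (Kᴴ * s * K)).trace = 1) ∧
      (¬ (∀ a ∈ G, s * a = a * s) → (ρ * (Kᴴ * s * K)).trace = 0)) :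
    ((hSfin.toFinset.card : ℂ))⁻¹ •
        ∑ s ∈ hSfin.toFinset, s * (K * ρ * Kᴴ) * s⁻¹
      = ((hGfin.toFinset.card : ℂ))⁻¹ •
        ∑ a ∈ hGfin.toFinset, a * ρ * a⁻¹ := by
  have hSP := hS.1
  have hGS' : ∀ x ∈ G, x ∈ S.centralizer → ∃ c : ℂ, ∃ h ∈ S, x = c • h := fun x hx hxS => by
    obtain ⟨c, -, h, -, hh, rfl⟩ := hGS x hx fun s hs => (hxS s hs).symm
    exact ⟨c, h, hh, rfl⟩
  obtain ⟨n, c, g, hKg⟩ := Submodule.mem_span_set'.mp hK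
  have hg : ∀ i, (g i : M Q) ∈ G := fun i => (g i).2
  have hS0 : (hSfin.toFinset.card : ℂ) ≠ 0 :=
    Nat.cast_ne_zero.mpr (Finset.card_ne_zero_of_mem (hSfin.mem_toFinset.mpr hSP.2.1))
  have hSK := twirl_conj_state_eq_sum hSP hSfin hG hGS' hρtr hρ hg hKg
  obtain ⟨μ, hμ⟩ := exists_sum_conj_state_eq_smul_twirl hSP hG hGfin hGS' hρtr hρ hg
    fun b₀ hb₀ => sum_coset_weight_eq hSP hSfin hG hρ hg hKg hKexp hb₀
  have htrK : (K * ρ * Kᴴ).trace = 1 := by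
    rw [Matrix.trace_mul_cycle, ← Matrix.trace_mul_comm, ← mul_one Kᴴ,
      (hKexp 1 hSP.2.1).1 fun a _ => by rw [one_mul, mul_one]]
  have htrD := congrArg Matrix.trace hSK
  rw [trace_twirl (fun s hs => hSP.1 (hSfin.mem_toFinset.mp hs)), htrK, Matrix.trace_smul,
    smul_eq_mul, mul_one, eq_comm, mul_eq_left₀ hS0] at htrD
  rw [sum_conj_inv_eq_twirl hSP.1, sum_conj_inv_eq_twirl hG.1, hSK, inv_smul_smul₀ hS0]
  exact Matrix.eq_inv_smul_of_eq_smul hμ htrD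
    (trace_twirl (fun a ha => hG.1 (hGfin.mem_toFinset.mp ha)) ρ |>.trans (by rw [hρtr, mul_one]))

end CC
end
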